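/- Let p_𝔻 be a hyperbolic seminorm on a hyperbolic normed 𝔹ℂ-module X, and for α ∈ 𝔻⁺ let V_α = {x ∈ X : p_𝔻(x) ≤ α}. If there exist a ∈ X and r > 0 with the closed ball B[a, r] contained in the closure of V_α, then for every δ > 0 the closed ball B[0, δr] is contained in the closure of V_{δα}. -/

import Mathlib

noncomputable section

/-- Bicomplex numbers 𝔹ℂ in idempotent coordinates: Z = e₁z₁ + e₂z₂ ↔ (z₁, z₂). -/
abbrev BC := ℂ × ℂ

/-- Hyperbolic numbers 𝔻 in idempotent coordinates: α = α₁e₁ + α₂e₂ ↔ (α₁, α₂). -/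
abbrev Hyp := ℝ × ℝ

/-- Positive hyperbolic numbers 𝔻⁺. -/
def Dpos : Set Hyp := {a | 0 ≤ a.1 ∧ 0 ≤ a.2}

/-- The partial order α ≤ β iff β - α ∈ 𝔻⁺. -/
def dle (a b : Hyp) : Prop := b - a ∈ Dpos

/-- The hyperbolic-valued norm |Z|_k = e₁|z₁| + e₂|z₂| of a bicomplex number. -/
def knorm (z : BC) : Hyp := (‖z.1‖, ‖z.2‖)

/-- The Euclidean modulus of a hyperbolic number α = β₁ + kβ₂, √(β₁² + β₂²),
expressed in idempotent coordinates. -/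
def emod (d : Hyp) : ℝ := Real.sqrt ((d.1 ^ 2 + d.2 ^ 2) / 2)

/-- A hyperbolic-valued norm on a 𝔹ℂ-module X. -/
structure HNorm (X : Type*) [AddCommGroup X] [Module BC X] where
  toFun : X → Hyp
  pos : ∀ x, toFun x ∈ Dpos
  eq_zero_iff : ∀ x, toFun x = 0 ↔ x = 0
  hsmul : ∀ (μ : BC) (x : X), toFun (μ • x) = knorm μ * toFun x
  triangle : ∀ x y, dle (toFun (x + y)) (toFun x + toFun y)

/-- A hyperbolic seminorm on a 𝔹ℂ-module X. -/
structure HSeminorm (X : Type*) [AddCommGroup X] [Module BC X] where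
  toFun : X → Hyp
  pos : ∀ x, toFun x ∈ Dpos
  hsmul : ∀ (μ : BC) (x : X), toFun (μ • x) = knorm μ * toFun x
  triangle : ∀ x y, dle (toFun (x + y)) (toFun x + toFun y)

variable {X : Type*} [AddCommGroup X] [Module BC X]

/-- The real-valued distance induced by a hyperbolic norm. -/
def HNorm.dist (N : HNorm X) (x y : X) : ℝ := emod (N.toFun (x - y))

/-- Convergence of a sequence with respect to a hyperbolic norm. -/
def TendstoH (N : HNorm X) (u : ℕ → X) (l : X) : Prop :=
  ∀ ε > (0 : ℝ), ∃ n₀, ∀ n ≥ n₀, N.dist (u n) l < ε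

/-- Cauchy sequences with respect to a hyperbolic norm. -/
def CauchyH (N : HNorm X) (u : ℕ → X) : Prop :=
  ∀ ε > (0 : ℝ), ∃ n₀, ∀ m ≥ n₀, ∀ n ≥ n₀, N.dist (u m) (u n) < ε

/-- X is an F-𝔹ℂ module: every Cauchy sequence converges. -/
def CompleteH (N : HNorm X) : Prop :=
  ∀ u : ℕ → X, CauchyH N u → ∃ l, TendstoH N u l

/-- The series Σ xₖ converges to s in X. -/
def SumToH (N : HNorm X) (x : ℕ → X) (s : X) : Prop :=
  TendstoH N (fun n => ∑ k ∈ Finset.range n, x k) s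

/-- Convergence of a sequence of hyperbolic numbers. -/
def TendstoD (u : ℕ → Hyp) (l : Hyp) : Prop :=
  ∀ ε > (0 : ℝ), ∃ n₀, ∀ n ≥ n₀, emod (u n - l) < ε

/-- The series Σ dₖ of hyperbolic numbers converges to L. -/
def SumToD (d : ℕ → Hyp) (L : Hyp) : Prop :=
  TendstoD (fun n => ∑ k ∈ Finset.range n, d k) L

/-- Open sets in the topology induced by a hyperbolic norm. -/
def IsOpenH (N : HNorm X) (U : Set X) : Prop :=
  ∀ x ∈ U, ∃ ε > (0 : ℝ), ∀ y, N.dist y x < ε → y ∈ U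

/-- Dense sets in the topology induced by a hyperbolic norm. -/
def DenseH (N : HNorm X) (U : Set X) : Prop :=
  ∀ x : X, ∀ ε > (0 : ℝ), ∃ y ∈ U, N.dist y x < ε

/-- The closure of a set in the topology induced by a hyperbolic norm. -/
def ClosureH (N : HNorm X) (S : Set X) : Set X :=
  {x | ∀ ε > (0 : ℝ), ∃ y ∈ S, N.dist y x < ε}

/-- Continuity of a 𝔻-valued map on X (w.r.t. the hyperbolic-norm topology on X and
the Euclidean topology on 𝔻). -/
def ContinuousHD (N : HNorm X) (p : X → Hyp) : Prop :=
  ∀ x : X, ∀ ε > (0 : ℝ), ∃ δ > (0 : ℝ), ∀ y, N.dist y x < δ → emod (p y - p x) < ε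

/-- A hyperbolic seminorm is countably subadditive if whenever Σ xₖ converges to x in X and
Σ p(xₖ) converges to L in 𝔻, we have p(x) ≤ L. -/
def CountablySubadditive (N : HNorm X) (p : HSeminorm X) : Prop :=
  ∀ (x : ℕ → X) (s : X) (L : Hyp),
    SumToH N x s → SumToD (fun k => p.toFun (x k)) L → dle (p.toFun s) L

section Maps

variable {Y : Type*} [AddCommGroup Y] [Module BC Y]

/-- 𝔹ℂ-linearity of a map between 𝔹ℂ-modules. -/
def IsBCLinear (T : X → Y) : Prop :=
  (∀ x y, T (x + y) = T x + T y) ∧ ∀ (μ : BC) (x : X), T (μ • x) = μ • T x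

/-- Continuity of a map between hyperbolic normed modules. -/
def ContinuousMapH (NX : HNorm X) (NY : HNorm Y) (T : X → Y) : Prop :=
  ∀ x : X, ∀ ε > (0 : ℝ), ∃ δ > (0 : ℝ), ∀ y, NX.dist y x < δ → NY.dist (T y) (T x) < ε

/-- The graph of T is closed: xₙ → x and Txₙ → y imply Tx = y. -/
def ClosedGraphH (NX : HNorm X) (NY : HNorm Y) (T : X → Y) : Prop :=
  ∀ (u : ℕ → X) (x : X) (y : Y),
    TendstoH NX u x → TendstoH NY (fun n => T (u n)) y → T x = y

/-- T is an open map: images of open sets are open. -/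
def IsOpenMapH (NX : HNorm X) (NY : HNorm Y) (T : X → Y) : Prop :=
  ∀ U : Set X, IsOpenH NX U → IsOpenH NY (T '' U)

end Maps


lemma dle_iff' (a b : Hyp) : dle a b ↔ a.1 ≤ b.1 ∧ a.2 ≤ b.2 := by
  simp [dle, Dpos, Set.mem_setOf_eq, sub_nonneg]

lemma emod_mono' {a b : Hyp} (ha : 0 ≤ a.1) (hb : 0 ≤ a.2) (h1 : a.1 ≤ b.1) (h2 : a.2 ≤ b.2) :
    emod a ≤ emod b := by
  apply Real.sqrt_le_sqrt
  gcongr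

lemma emod_smul' (c : ℝ) (hc : 0 ≤ c) (a : Hyp) : emod (c * a.1, c * a.2) = c * emod a := by
  unfold emod
  rw [show (c*a.1)^2 + (c*a.2)^2 = c^2 * (a.1^2 + a.2^2) by ring,
    show c^2 * (a.1^2+a.2^2)/2 = c^2 * ((a.1^2+a.2^2)/2) by ring,
    Real.sqrt_mul (sq_nonneg c), Real.sqrt_sq hc]

lemma emod_eq_abs' (d : Hyp) : emod d = ‖(⟨d.1, d.2⟩ : ℂ)‖ / Real.sqrt 2 := by
  rw [Complex.norm_def, Complex.normSq_mk, emod, Real.sqrt_div (by positivity)]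
  ring_nf

lemma emod_add_le' (a b : Hyp) : emod (a + b) ≤ emod a + emod b := by
  rw [emod_eq_abs', emod_eq_abs', emod_eq_abs']
  have h : (⟨(a+b).1, (a+b).2⟩ : ℂ) = ⟨a.1, a.2⟩ + ⟨b.1, b.2⟩ := by
    simp [Complex.ext_iff]
  rw [h, ← add_div]
  exact div_le_div_of_nonneg_right (c := Real.sqrt 2) (norm_add_le _ _) (Real.sqrt_nonneg 2)

section MainAux
variable {X : Type*} [AddCommGroup X] [Module BC X]

lemma knorm_real (c : ℝ) (hc : 0 ≤ c) : knorm (((c:ℂ), (c:ℂ)) : BC) = ((c, c) : Hyp) := by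
  simp [knorm, Complex.norm_real, abs_of_nonneg hc]

lemma hnorm_neg (N : HNorm X) (x : X) : N.toFun (-x) = N.toFun x := by
  have : (-x : X) = ((-1 : BC)) • x := by rw [neg_one_smul]
  rw [this, N.hsmul]
  have : knorm (-1 : BC) = (1 : Hyp) := by
    simp [knorm, Prod.ext_iff]
  rw [this, one_mul]

lemma hsemi_neg (p : HSeminorm X) (x : X) : p.toFun (-x) = p.toFun x := by
  have : (-x : X) = ((-1 : BC)) • x := by rw [neg_one_smul]
  rw [this, p.hsmul]
  have : knorm (-1 : BC) = (1 : Hyp) := by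
    simp [knorm, Prod.ext_iff]
  rw [this, one_mul]

end MainAux

set_option maxHeartbeats 1000000 in
/-- If a closed ball B[a, r] lies in the closure of V_α = {x : p(x) ≤ α}, then for every
δ > 0 the closed ball B[0, δr] lies in the closure of V_{δα}. -/
theorem ball_subset_closure_scaling {X : Type*} [AddCommGroup X] [Module BC X]
    (N : HNorm X) (p : HSeminorm X) (α : Hyp) (hα : α ∈ Dpos)
    (a : X) (r : ℝ) (hr : 0 < r)
    (h : {x : X | dle (N.toFun (x - a)) ((r, r) : Hyp)} ⊆
          ClosureH N {x : X | dle (p.toFun x) α}) :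
    ∀ δ : ℝ, 0 < δ →
      {x : X | dle (N.toFun x) ((δ * r, δ * r) : Hyp)} ⊆
        ClosureH N {x : X | dle (p.toFun x) (δ • α)} := by
  intro δ hδ x hx ε hε
  rw [Set.mem_setOf_eq, dle_iff'] at hx
  have hδ' : (0:ℝ) < δ⁻¹ := inv_pos.2 hδ
  set μinv : BC := ((((δ⁻¹:ℝ)):ℂ), (((δ⁻¹:ℝ)):ℂ)) with hμinv
  set μδ : BC := ((((δ:ℝ)):ℂ), (((δ:ℝ)):ℂ)) with hμδ
  set μh : BC := (((1/2:ℝ):ℂ), ((1/2:ℝ):ℂ)) with hμh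
  set y : X := μinv • x with hy
  have hNy : N.toFun y = (δ⁻¹ * (N.toFun x).1, δ⁻¹ * (N.toFun x).2) := by
    rw [hy, N.hsmul, knorm_real _ hδ'.le]
    rfl
  have hNy_le : (N.toFun y).1 ≤ r ∧ (N.toFun y).2 ≤ r := by
    rw [hNy]
    constructor
    · calc δ⁻¹ * (N.toFun x).1 ≤ δ⁻¹ * (δ * r) := by
            apply mul_le_mul_of_nonneg_left hx.1 hδ'.le
          _ = r := by field_simp
    · calc δ⁻¹ * (N.toFun x).2 ≤ δ⁻¹ * (δ * r) := by
            apply mul_le_mul_of_nonneg_left hx.2 hδ'.le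
          _ = r := by field_simp
  have hmem1 : (a + y) ∈ {z : X | dle (N.toFun (z - a)) ((r, r) : Hyp)} := by
    show dle (N.toFun (a + y - a)) ((r, r) : Hyp)
    rw [add_sub_cancel_left, dle_iff']
    exact hNy_le
  have hmem2 : (a - y) ∈ {z : X | dle (N.toFun (z - a)) ((r, r) : Hyp)} := by
    show dle (N.toFun (a - y - a)) ((r, r) : Hyp)
    have : a - y - a = -y := by abel
    rw [this, hnorm_neg, dle_iff']
    exact hNy_le
  set η : ℝ := ε / δ with hη
  have hη' : 0 < η := div_pos hε hδ
  obtain ⟨u, hu_mem, hu_dist⟩ := h hmem1 η hη'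
  obtain ⟨v, hv_mem, hv_dist⟩ := h hmem2 η hη'
  rw [Set.mem_setOf_eq, dle_iff'] at hu_mem hv_mem
  set w : X := μh • (u - v) with hw
  have hknh : knorm μh = ((1/2, 1/2) : Hyp) := knorm_real _ (by norm_num)
  have hpuv : (p.toFun (u - v)).1 ≤ (p.toFun u).1 + (p.toFun v).1 ∧
      (p.toFun (u - v)).2 ≤ (p.toFun u).2 + (p.toFun v).2 := by
    have := (dle_iff' _ _).1 (p.triangle u (-v))
    rw [hsemi_neg] at this
    simpa [sub_eq_add_neg] using this
  have hpw : (p.toFun w).1 ≤ α.1 ∧ (p.toFun w).2 ≤ α.2 := by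
    rw [hw, p.hsmul, hknh]
    constructor
    · show (1/2) * (p.toFun (u-v)).1 ≤ α.1
      nlinarith [hpuv.1, hu_mem.1, hv_mem.1]
    · show (1/2) * (p.toFun (u-v)).2 ≤ α.2
      nlinarith [hpuv.2, hu_mem.2, hv_mem.2]
  set z : X := μδ • w with hz
  have hpz : dle (p.toFun z) (δ • α) := by
    rw [hz, p.hsmul, knorm_real _ hδ.le, dle_iff']
    constructor
    · show δ * (p.toFun w).1 ≤ (δ • α).1
      have : (δ • α).1 = δ * α.1 := rfl
      rw [this]
      exact mul_le_mul_of_nonneg_left hpw.1 hδ.le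
    · show δ * (p.toFun w).2 ≤ (δ • α).2
      have : (δ • α).2 = δ * α.2 := rfl
      rw [this]
      exact mul_le_mul_of_nonneg_left hpw.2 hδ.le
  refine ⟨z, hpz, ?_⟩
  have hμδy : μδ • y = x := by
    rw [hy, smul_smul]
    have : μδ * μinv = (1 : BC) := by
      have hδ0 : (δ:ℂ) ≠ 0 := by exact_mod_cast hδ.ne'
      simp only [hμδ, hμinv, Prod.mk_mul_mk, Prod.ext_iff, Prod.fst_one, Prod.snd_one]
      constructor <;> · push_cast; field_simp
    rw [this, one_smul]
  have hwy : w - y = μh • ((u - (a + y)) - (v - (a - y))) := by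
    have h2 : μh • (y + y) = y := by
      rw [smul_add, ← add_smul]
      have : μh + μh = (1 : BC) := by
        simp only [hμh, Prod.mk_add_mk, Prod.ext_iff]
        constructor <;> · push_cast; norm_num
      rw [this, one_smul]
    have harg : (u - (a + y)) - (v - (a - y)) = (u - v) - (y + y) := by abel
    rw [harg, smul_sub, h2, hw]
  set A : Hyp := N.toFun (u - (a + y)) with hA
  set B : Hyp := N.toFun (v - (a - y)) with hB
  have hApos := N.pos (u - (a + y))
  have hBpos := N.pos (v - (a - y))
  have hNwy : (N.toFun (w - y)).1 ≤ (1/2) * (A + B).1 ∧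
      (N.toFun (w - y)).2 ≤ (1/2) * (A + B).2 := by
    rw [hwy, N.hsmul, hknh]
    have htri := (dle_iff' _ _).1 (N.triangle (u - (a + y)) (-(v - (a - y))))
    rw [hnorm_neg] at htri
    have hsub : (u - (a + y)) + -(v - (a - y)) = (u - (a + y)) - (v - (a - y)) := by abel
    rw [hsub] at htri
    constructor
    · show (1/2) * (N.toFun ((u - (a+y)) - (v - (a-y)))).1 ≤ _
      have hab : (A + B).1 = A.1 + B.1 := rfl
      rw [hab]; nlinarith [htri.1]
    · show (1/2) * (N.toFun ((u - (a+y)) - (v - (a-y)))).2 ≤ _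
      have hab : (A + B).2 = A.2 + B.2 := rfl
      rw [hab]; nlinarith [htri.2]
  have hNpos := N.pos (w - y)
  have hdwy : N.dist w y < η := by
    unfold HNorm.dist
    calc emod (N.toFun (w - y)) ≤ emod ((1/2) * (A+B).1, (1/2) * (A+B).2) :=
          emod_mono' hNpos.1 hNpos.2 hNwy.1 hNwy.2
      _ = (1/2) * emod (A + B) := emod_smul' _ (by norm_num) _
      _ ≤ (1/2) * (emod A + emod B) := by
          have := emod_add_le' A B
          nlinarith [this]
      _ < η := by
          have h1 : emod A < η := hu_dist
          have h2 : emod B < η := hv_dist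
          nlinarith
  show N.dist z x < ε
  have hzx : z - x = μδ • (w - y) := by
    rw [hz, ← hμδy, smul_sub]
  unfold HNorm.dist
  rw [hzx, N.hsmul, knorm_real _ hδ.le]
  have hmul : ((δ, δ) : Hyp) * N.toFun (w - y) =
      (δ * (N.toFun (w - y)).1, δ * (N.toFun (w - y)).2) := rfl
  rw [hmul, emod_smul' _ hδ.le]
  calc δ * emod (N.toFun (w - y)) < δ * η := by
        exact mul_lt_mul_of_pos_left hdwy hδ
    _ = ε := by rw [hη]; field_simp
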